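/- arXiv:2403.13609 — 2 statements merged into one kernel-verified Lean document; each statement's English description precedes it below -/
import Mathlib

section
/- Let a > 0 and let p = (x, y, z) ∈ ℝ³ be the point with bispherical coordinates (ξ, η, φ), ξ ∈ (0, π), i.e., x = a sinh η/(cosh η − cos ξ), y = a sin ξ cos φ/(cosh η − cos ξ), z = a sin ξ sin φ/(cosh η − cos ξ). Let F₊ = (a,0,0), F₋ = (−a,0,0). Then the angle at p in the triangle F₊ p F₋ equals ξ, i.e., the inner product of the unit vectors from p to F₊ and from p to F₋ equals cos ξ. -/
/-!
Put `d = cosh η - cos ξ`. Since `sinh² η + sin² ξ = cosh² η - cos² ξ`, the point `p` satisfies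
`‖p‖² = a² (cosh η + cos ξ) / d`, and expanding gives `‖F₊ - p‖² = 2a² e^{-η} / d`,
`‖F₋ - p‖² = 2a² e^{η} / d` and `⟪F₊ - p, F₋ - p⟫ = 2a² cos ξ / d`. Hence
`‖F₊ - p‖ ‖F₋ - p‖ = 2a² / d`, and the quotient is `cos ξ`.
-/

open Real
open scoped RealInnerProductSpace

noncomputable def bisphericalPoint (a η ξ φ : ℝ) : EuclideanSpace ℝ (Fin 3) :=
  !₂[a * sinh η / (cosh η - cos ξ), a * sin ξ * cos φ / (cosh η - cos ξ),
    a * sin ξ * sin φ / (cosh η - cos ξ)]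

theorem real_inner_inv_norm_smul_inv_norm_smul {V : Type*} [NormedAddCommGroup V]
    [InnerProductSpace ℝ V] (u v : V) :
    ⟪‖u‖⁻¹ • u, ‖v‖⁻¹ • v⟫ = ⟪u, v⟫ / (‖u‖ * ‖v‖) := by
  rw [real_inner_smul_left, real_inner_smul_right]
  ring

theorem cosh_sub_cos_pos (η : ℝ) {ξ : ℝ} (hξ : ξ ∈ Set.Ioo 0 π) : 0 < cosh η - cos ξ := by
  have : cos ξ < cos 0 := cos_lt_cos_of_nonneg_of_le_pi le_rfl hξ.2.le hξ.1
  linarith [one_le_cosh η, cos_zero]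

theorem inner_sub_bisphericalPoint_sub_bisphericalPoint {a η ξ : ℝ} (φ : ℝ)
    (hd : cosh η - cos ξ ≠ 0) (c c' : ℝ) :
    ⟪!₂[c, 0, 0] - bisphericalPoint a η ξ φ, !₂[c', 0, 0] - bisphericalPoint a η ξ φ⟫
      = c * c' - ((c + c') * a * sinh η - a ^ 2 * (cosh η + cos ξ)) / (cosh η - cos ξ) := by
  simp only [bisphericalPoint, PiLp.inner_apply, Fin.sum_univ_three, PiLp.sub_apply,
    Matrix.cons_val_zero, Matrix.cons_val_one, Matrix.cons_val_two, Matrix.head_cons,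
    Matrix.tail_cons, RCLike.inner_apply, conj_trivial]
  field_simp
  linear_combination (a * sin ξ) ^ 2 * sin_sq_add_cos_sq φ + a ^ 2 * sin_sq_add_cos_sq ξ
    - a ^ 2 * cosh_sq η

/-- For a point `p` with bispherical coordinates `(ξ, η, φ)`, `ξ ∈ (0, π)`, and foci
`F₊ = (a,0,0)`, `F₋ = (−a,0,0)`, the inner product of the unit vectors from `p` to the two
foci equals `cos ξ`, i.e. the angle at `p` in the triangle `F₊ p F₋` is `ξ`. -/
theorem bispherical_first_coordinate_is_angle (a η ξ φ : ℝ) (ha : 0 < a)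
    (hξ : ξ ∈ Set.Ioo 0 Real.pi)
    (p Fp Fm : EuclideanSpace ℝ (Fin 3))
    (hp : p = ![a * Real.sinh η / (Real.cosh η - Real.cos ξ),
          a * Real.sin ξ * Real.cos φ / (Real.cosh η - Real.cos ξ),
          a * Real.sin ξ * Real.sin φ / (Real.cosh η - Real.cos ξ)])
    (hFp : Fp = ![a, 0, 0]) (hFm : Fm = ![-a, 0, 0]) :
    inner ℝ (‖Fp - p‖⁻¹ • (Fp - p)) (‖Fm - p‖⁻¹ • (Fm - p)) = Real.cos ξ := by
  replace hp : p = bisphericalPoint a η ξ φ := congrArg (WithLp.toLp 2) hp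
  replace hFp : Fp = !₂[a, 0, 0] := congrArg (WithLp.toLp 2) hFp
  replace hFm : Fm = !₂[-a, 0, 0] := congrArg (WithLp.toLp 2) hFm
  have hd := cosh_sub_cos_pos η hξ
  have hinner := inner_sub_bisphericalPoint_sub_bisphericalPoint (a := a) φ hd.ne'
  have hFpFm : ⟪Fp - p, Fm - p⟫ = 2 * a ^ 2 / (cosh η - cos ξ) * cos ξ := by
    rw [hp, hFp, hFm, hinner]; field_simp; ring
  have hnormFp : ‖Fp - p‖ ^ 2 = 2 * a ^ 2 / (cosh η - cos ξ) * exp (-η) := by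
    rw [← real_inner_self_eq_norm_sq, hp, hFp, hinner, ← cosh_sub_sinh]; field_simp; ring
  have hnormFm : ‖Fm - p‖ ^ 2 = 2 * a ^ 2 / (cosh η - cos ξ) * exp η := by
    rw [← real_inner_self_eq_norm_sq, hp, hFm, hinner, ← cosh_add_sinh]; field_simp; ring
  have hnorms : ‖Fp - p‖ * ‖Fm - p‖ = 2 * a ^ 2 / (cosh η - cos ξ) := by
    refine (pow_left_inj₀ (by positivity) (by positivity) two_ne_zero).1 ?_
    rw [mul_pow, hnormFp, hnormFm, mul_mul_mul_comm, ← exp_add, neg_add_cancel, exp_zero]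
    ring
  rw [real_inner_inv_norm_smul_inv_norm_smul, hFpFm, hnorms]
  field_simp
end

section
/- Let two triangles p₁p₂p₃ and q₁q₂q₃ in ℝ³ satisfy: ‖p₂ − p₁‖ = ‖q₂ − q₁‖ > 0, the angles at the third vertex are equal (ξ₃ = ξ₃*), and the ratios ‖p₃ − p₁‖/‖p₃ − p₂‖ = ‖q₃ − q₁‖/‖q₃ − q₂‖ (with all points distinct). Then all corresponding side lengths are equal: ‖p₃ − p₁‖ = ‖q₃ − q₁‖ and ‖p₃ − p₂‖ = ‖q₃ − q₂‖. -/
open EuclideanGeometry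

/-
With r = d₃₁ / d₃₂ the law of cosines at the apex reads d₂₁² = d₃₂² (1 + r² − 2 r cos ξ₃).
For two triangles with the same base, apex angle and ratio r, the bracket is the same nonzero
number, so d₃₂ is the same in both, and then so is d₃₁ = r d₃₂.
-/

namespace EuclideanGeometry

variable {V P : Type*} [NormedAddCommGroup V] [InnerProductSpace ℝ V] [MetricSpace P]
  [NormedAddTorsor V P]

theorem law_cos_div_dist (p₁ p₂ p₃ : P) (h : p₂ ≠ p₃) :
    dist p₁ p₂ ^ 2 = dist p₃ p₂ ^ 2 *
      (1 + (dist p₃ p₁ / dist p₃ p₂) ^ 2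
        - 2 * (dist p₃ p₁ / dist p₃ p₂) * Real.cos (∠ p₁ p₃ p₂)) := by
  have hd : dist p₃ p₂ ≠ 0 := dist_ne_zero.2 h.symm
  rw [sq, law_cos p₁ p₃ p₂, dist_comm p₁ p₃, dist_comm p₂ p₃]
  field_simp
  ring

theorem dist_eq_of_dist_eq_of_angle_eq_of_div_eq {p₁ p₂ p₃ q₁ q₂ q₃ : P}
    (hp₁₂ : p₁ ≠ p₂) (hp₂₃ : p₂ ≠ p₃) (hq₂₃ : q₂ ≠ q₃)
    (hbase : dist p₁ p₂ = dist q₁ q₂) (hangle : ∠ p₁ p₃ p₂ = ∠ q₁ q₃ q₂)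
    (hratio : dist p₃ p₁ / dist p₃ p₂ = dist q₃ q₁ / dist q₃ q₂) :
    dist p₃ p₁ = dist q₃ q₁ ∧ dist p₃ p₂ = dist q₃ q₂ := by
  have hp := law_cos_div_dist p₁ p₂ p₃ hp₂₃
  have hq := law_cos_div_dist q₁ q₂ q₃ hq₂₃
  rw [← hangle, ← hratio, ← hbase] at hq
  have hf := right_ne_zero_of_mul (hp ▸ pow_ne_zero 2 (dist_ne_zero.2 hp₁₂))
  have hb : dist p₃ p₂ = dist q₃ q₂ :=
    (pow_left_inj₀ dist_nonneg dist_nonneg two_ne_zero).1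
      (mul_right_cancel₀ hf (hp.symm.trans hq))
  rw [hb] at hratio
  exact ⟨(div_left_inj' (dist_ne_zero.2 hq₂₃.symm)).1 hratio, hb⟩

end EuclideanGeometry

theorem triangle_determined_by_base_apexAngle_ratio_general
    (p₁ p₂ p₃ q₁ q₂ q₃ : EuclideanSpace ℝ (Fin 3))
    (hp12 : p₁ ≠ p₂) (hp23 : p₂ ≠ p₃)
    (hq23 : q₂ ≠ q₃)
    (hbase : ‖p₂ - p₁‖ = ‖q₂ - q₁‖)
    (hangle : EuclideanGeometry.angle p₁ p₃ p₂ = EuclideanGeometry.angle q₁ q₃ q₂)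
    (hratio : ‖p₃ - p₁‖ / ‖p₃ - p₂‖ = ‖q₃ - q₁‖ / ‖q₃ - q₂‖) :
    ‖p₃ - p₁‖ = ‖q₃ - q₁‖ ∧ ‖p₃ - p₂‖ = ‖q₃ - q₂‖ := by
  simp only [← dist_eq_norm] at hbase hratio ⊢
  rw [dist_comm p₂, dist_comm q₂] at hbase
  exact dist_eq_of_dist_eq_of_angle_eq_of_div_eq hp12 hp23 hq23 hbase hangle hratio

/-- Two triangles in ℝ³ with equal (positive) base lengths, equal apex angles at the third
vertex, equal ratios of the other two sides, and pairwise distinct vertices have all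
corresponding side lengths equal. -/
theorem triangle_determined_by_base_apexAngle_ratio
    (p₁ p₂ p₃ q₁ q₂ q₃ : EuclideanSpace ℝ (Fin 3))
    (hp12 : p₁ ≠ p₂) (hp13 : p₁ ≠ p₃) (hp23 : p₂ ≠ p₃)
    (hq12 : q₁ ≠ q₂) (hq13 : q₁ ≠ q₃) (hq23 : q₂ ≠ q₃)
    (hbase : ‖p₂ - p₁‖ = ‖q₂ - q₁‖) (hbasepos : 0 < ‖p₂ - p₁‖)
    (hangle : EuclideanGeometry.angle p₁ p₃ p₂ = EuclideanGeometry.angle q₁ q₃ q₂)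
    (hratio : ‖p₃ - p₁‖ / ‖p₃ - p₂‖ = ‖q₃ - q₁‖ / ‖q₃ - q₂‖) :
    ‖p₃ - p₁‖ = ‖q₃ - q₁‖ ∧ ‖p₃ - p₂‖ = ‖q₃ - q₂‖ :=
  triangle_determined_by_base_apexAngle_ratio_general p₁ p₂ p₃ q₁ q₂ q₃ hp12 hp23 hq23 hbase hangle
    hratio
end
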